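/- Let F, F' ∈ ℝ^K and y ∈ [K], and define the cross-entropy loss ℓ(F) = -log(exp(F_y)/Σ_{k=1}^K exp(F_k)) and p_y(F) = exp(F_y)/Σ_k exp(F_k). Writing Δ_k = F'_k - F_k, we have ℓ(F') - ℓ(F) ≤ log(1 + (1 - p_y(F)) · max_{j≠y}(exp(Δ_j - Δ_y) - 1)). -/

import Mathlib

/-! The loss increment is the logarithm of the `softmax F`-average of `exp (Δ k - Δ y)`.
Its term at `k = y` is `p_y · 1`, so the average is `1 + ∑_{j ≠ y} p_j (exp (Δ j - Δ y) - 1)`;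
bounding each bracket by the maximum leaves `1 + (1 - p_y) · max`. -/

open Real Finset

noncomputable def softmax {ι : Type*} [Fintype ι] (F : ι → ℝ) (k : ι) : ℝ :=
  exp (F k) / ∑ j, exp (F j)

section Softmax

variable {ι : Type*} [Fintype ι]

lemma sum_exp_pos [Nonempty ι] (F : ι → ℝ) : 0 < ∑ j, exp (F j) :=
  sum_pos (fun j _ => exp_pos (F j)) univ_nonempty

lemma softmax_pos [Nonempty ι] (F : ι → ℝ) (k : ι) : 0 < softmax F k :=
  div_pos (exp_pos (F k)) (sum_exp_pos F)

lemma sum_softmax [Nonempty ι] (F : ι → ℝ) : ∑ k, softmax F k = 1 := by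
  simp only [softmax, ← sum_div, div_self (sum_exp_pos F).ne']

lemma softmax_div_softmax (F F' : ι → ℝ) (y : ι) :
    softmax F y / softmax F' y = ∑ k, softmax F k * exp ((F' k - F k) - (F' y - F y)) := by
  have hterm : ∀ k, softmax F k * exp ((F' k - F k) - (F' y - F y)) =
      exp (F' k) * (exp (F y) / ((∑ j, exp (F j)) * exp (F' y))) := by
    intro k
    simp only [softmax, exp_sub]
    field_simp
  rw [sum_congr rfl fun k _ => hterm k, ← sum_mul]
  unfold softmax
  field_simp

lemma neg_log_softmax_sub_neg_log_softmax (F F' : ι → ℝ) (y : ι) :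
    -log (softmax F' y) - -log (softmax F y) =
      log (∑ k, softmax F k * exp ((F' k - F k) - (F' y - F y))) := by
  have : Nonempty ι := ⟨y⟩
  rw [← softmax_div_softmax, log_div (softmax_pos F y).ne' (softmax_pos F' y).ne']
  ring

end Softmax

lemma sum_mul_le_one_add_mul_of_sub_one_le {ι : Type*} [DecidableEq ι] {s : Finset ι}
    {p g : ι → ℝ} {y : ι} {M : ℝ} (hy : y ∈ s) (hp : ∀ j ∈ s, 0 ≤ p j) (hp_sum : ∑ j ∈ s, p j = 1) (hgy : g y = 1)
    (hgM : ∀ j ∈ s.erase y, g j - 1 ≤ M) :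
    ∑ j ∈ s, p j * g j ≤ 1 + (1 - p y) * M :=
  calc ∑ j ∈ s, p j * g j = ∑ j ∈ s, p j + ∑ j ∈ s, p j * (g j - 1) := by
        rw [← sum_add_distrib]; ring_nf
    _ = 1 + ∑ j ∈ s.erase y, p j * (g j - 1) := by
        rw [hp_sum, ← add_sum_erase s _ hy, hgy, sub_self, mul_zero, zero_add]
    _ ≤ 1 + ∑ j ∈ s.erase y, p j * M := by
        gcongr with j hj
        · exact hp j (mem_of_mem_erase hj)
        · exact hgM j hj
    _ = 1 + (1 - p y) * M := by rw [← sum_mul, sum_erase_eq_sub hy, hp_sum]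

/-- One-step cross-entropy loss increment bound:
`ℓ(F') - ℓ(F) ≤ log(1 + (1 - p_y(F)) · max_{j≠y}(exp(Δ_j - Δ_y) - 1))`
where `Δ_k = F'_k - F_k`. -/
theorem stmt15 (K : ℕ) (F F' : Fin K → ℝ) (y : Fin K)
    (hne : (Finset.univ.erase y).Nonempty) :
    (-Real.log (Real.exp (F' y) / ∑ k, Real.exp (F' k))) -
        (-Real.log (Real.exp (F y) / ∑ k, Real.exp (F k))) ≤
      Real.log (1 + (1 - Real.exp (F y) / ∑ k, Real.exp (F k)) *
        ((Finset.univ.erase y).sup' hne fun j =>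
          Real.exp ((F' j - F j) - (F' y - F y)) - 1)) := by
  have : Nonempty (Fin K) := ⟨y⟩
  have hsum_pos : 0 < ∑ k, softmax F k * exp ((F' k - F k) - (F' y - F y)) :=
    sum_pos (fun k _ => mul_pos (softmax_pos F k) (exp_pos _)) univ_nonempty
  refine (neg_log_softmax_sub_neg_log_softmax F F' y).trans_le (log_le_log hsum_pos ?_)
  exact sum_mul_le_one_add_mul_of_sub_one_le (mem_univ y) (fun k _ => (softmax_pos F k).le)
    (sum_softmax F) (by simp)
    (fun j hj => le_sup' (fun j => exp ((F' j - F j) - (F' y - F y)) - 1) hj)
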